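/- arXiv:2412.18268 — 7 statements merged into one kernel-verified Lean document; each statement's English description precedes it below -/
import Mathlib

section
/- Suppose that for every s ∈ S the set {a ∈ A : Â(s,a) = 0} is contained in {a ∈ A : A⋆(s,a) = 0}. Then there exists a class 𝒦 function α : [0,∞) → [0,∞) such that Â(s,a) ≥ α(A⋆(s,a)) for all (s,a) ∈ S × A. (Construction direction of Lemma 1.) -/
/-- A class `𝒦` function `[0,∞) → [0,∞)`: vanishes at `0` and is strictly
increasing on `[0,∞)` (nonnegativity on `[0,∞)` then follows). -/
def IsClassK (α : ℝ → ℝ) : Prop :=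
  α 0 = 0 ∧ StrictMonoOn α (Set.Ici 0)

/-- construction direction of Lemma 1: on compact spaces with
continuous nonnegative `A⋆, Â` each attaining the value `0` in every state, if for
every `s` the zeros (minimizers) of `Â(s,·)` are contained in the zeros (minimizers)
of `A⋆(s,·)`, then there is a class `𝒦` function `α` with `Â(s,a) ≥ α(A⋆(s,a))`
for all `(s,a)`. -/
theorem stmt_1 {S A : Type*} [TopologicalSpace S] [TopologicalSpace A]
    [CompactSpace S] [CompactSpace A] [Nonempty S] [Nonempty A]
    (Astar Ahat : S × A → ℝ)
    (hAstar_cont : Continuous Astar) (hAhat_cont : Continuous Ahat)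
    (hAstar_nonneg : ∀ p : S × A, 0 ≤ Astar p)
    (hAhat_nonneg : ∀ p : S × A, 0 ≤ Ahat p)
    (hAstar_zero : ∀ s : S, ∃ a : A, Astar (s, a) = 0)
    (hAhat_zero : ∀ s : S, ∃ a : A, Ahat (s, a) = 0)
    (hsubset : ∀ s : S, {a : A | Ahat (s, a) = 0} ⊆ {a : A | Astar (s, a) = 0}) :
    ∃ α : ℝ → ℝ, IsClassK α ∧ ∀ p : S × A, α (Astar p) ≤ Ahat p := by
  classical
  set T : ℝ → Set ℝ := fun r => Ahat '' {p : S × A | r ≤ Astar p} ∪ {1} with hT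
  set g : ℝ → ℝ := fun r => sInf (T r) with hg
  have hne : ∀ r, (T r).Nonempty := fun r => ⟨1, Or.inr rfl⟩
  have hlb : ∀ r, ∀ x ∈ T r, (0:ℝ) ≤ x := by
    rintro r x (⟨p, -, rfl⟩ | rfl)
    · exact hAhat_nonneg p
    · norm_num
  have hbdd : ∀ r, BddBelow (T r) := fun r => ⟨0, fun x hx => hlb r x hx⟩
  have hg_nonneg : ∀ r, 0 ≤ g r := fun r => le_csInf (hne r) (hlb r)
  have hg_mono : Monotone g := by
    intro r1 r2 h
    refine csInf_le_csInf (hbdd r1) (hne r2) ?_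
    rintro x (⟨p, hp, rfl⟩ | rfl)
    · exact Or.inl ⟨p, le_trans h hp, rfl⟩
    · exact Or.inr rfl
  have hg_pos : ∀ r, 0 < r → 0 < g r := by
    intro r hr
    by_cases hK : ({p : S × A | r ≤ Astar p} : Set (S × A)).Nonempty
    · have hKc : IsCompact {p : S × A | r ≤ Astar p} := by
        have : IsClosed {p : S × A | r ≤ Astar p} :=
          isClosed_le continuous_const hAstar_cont
        exact this.isCompact
      have himg : IsCompact (Ahat '' {p : S × A | r ≤ Astar p}) :=
        hKc.image hAhat_cont
      have himgne : (Ahat '' {p : S × A | r ≤ Astar p}).Nonempty := hK.image _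
      have hmem := himg.sInf_mem himgne
      obtain ⟨p0, hp0, hp0e⟩ := hmem
      set m := sInf (Ahat '' {p : S × A | r ≤ Astar p}) with hm
      have hm_pos : 0 < m := by
        rcases lt_or_eq_of_le (hAhat_nonneg p0) with h | h
        · rw [← hp0e]; exact h
        · exfalso
          have h0 : Ahat (p0.1, p0.2) = 0 := by rw [Prod.mk.eta]; exact h.symm
          have := hsubset p0.1 h0
          simp only [Set.mem_setOf_eq, Prod.mk.eta] at this
          have h2 : (0:ℝ) < Astar p0 := lt_of_lt_of_le hr hp0
          linarith
      refine lt_of_lt_of_le (lt_min hm_pos one_pos) (le_csInf (hne r) ?_)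
      rintro x (hx | rfl)
      · exact le_trans (min_le_left _ _) (csInf_le (himg.bddBelow) hx)
      · exact min_le_right _ _
    · have hEmpty : Ahat '' {p : S × A | r ≤ Astar p} = ∅ := by
        rw [Set.image_eq_empty]
        exact Set.not_nonempty_iff_eq_empty.mp hK
      have hT1 : T r = {1} := by simp only [hT]; rw [hEmpty]; simp
      have : g r = 1 := by
        show sInf (T r) = 1
        rw [hT1, csInf_singleton]
      rw [this]; norm_num
  have hg_le : ∀ p : S × A, g (Astar p) ≤ Ahat p := by
    intro p
    exact csInf_le (hbdd _) (Or.inl ⟨p, Set.mem_setOf_eq ▸ le_refl _, rfl⟩)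
  -- the class K function
  set f : ℝ → ℝ := fun r => r / (1 + r) with hf
  have hf_mono : StrictMonoOn f (Set.Ici 0) := by
    intro r1 hr1 r2 hr2 h
    simp only [Set.mem_Ici] at hr1 hr2
    rw [hf]
    have h1 : (0:ℝ) < 1 + r1 := by linarith
    have h2 : (0:ℝ) < 1 + r2 := by linarith
    rw [div_lt_div_iff₀ h1 h2]
    nlinarith
  have hf_nonneg : ∀ r, 0 ≤ r → 0 ≤ f r := by
    intro r hr
    exact div_nonneg hr (by linarith)
  have hf_pos : ∀ r, 0 < r → 0 < f r := by
    intro r hr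
    exact div_pos hr (by linarith)
  have hf_le1 : ∀ r, 0 ≤ r → f r ≤ 1 := by
    intro r hr
    rw [hf, div_le_one (by linarith)]
    linarith
  refine ⟨fun r => f r * g r, ⟨?_, ?_⟩, ?_⟩
  · simp [hf]
  · intro r1 hr1 r2 hr2 h
    simp only [Set.mem_Ici] at hr1 hr2
    simp only
    rcases eq_or_lt_of_le hr1 with h0 | h0
    · have : f r1 = 0 := by rw [hf, ← h0]; simp
      rw [this, zero_mul]
      exact mul_pos (hf_pos r2 (lt_of_le_of_lt hr1 h)) (hg_pos r2 (lt_of_le_of_lt hr1 h))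
    · calc f r1 * g r1 < f r2 * g r1 :=
            mul_lt_mul_of_pos_right (hf_mono (Set.mem_Ici.mpr hr1) (Set.mem_Ici.mpr hr2) h)
              (hg_pos r1 h0)
        _ ≤ f r2 * g r2 :=
            mul_le_mul_of_nonneg_left (hg_mono (le_of_lt h)) (hf_nonneg r2 hr2)
  · intro p
    have h1 : f (Astar p) * g (Astar p) ≤ 1 * g (Astar p) :=
      mul_le_mul_of_nonneg_right (hf_le1 _ (hAstar_nonneg p)) (hg_nonneg _)
    rw [one_mul] at h1
    exact le_trans h1 (hg_le p)
end

section
/- The following two conditions are equivalent: (i) there exists a class 𝒦 function α : [0,∞) → [0,∞) such that Â(s,a) ≥ α(A⋆(s,a)) for all (s,a) ∈ S × A; (ii) for every s ∈ S, the set {a ∈ A : Â(s,a) = 0} is contained in {a ∈ A : A⋆(s,a) = 0}, i.e., argmin_a Â(s,a) ⊆ argmin_a A⋆(s,a) for every s. (Lemma 1.) -/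
/-- Lemma 1: there exists a class `𝒦` function `α` with
`Â(s,a) ≥ α(A⋆(s,a))` for all `(s,a)` iff for every `s` the zeros (minimizers)
of `Â(s,·)` are contained in the zeros (minimizers) of `A⋆(s,·)`. -/
theorem stmt_2 {S A : Type*} [TopologicalSpace S] [TopologicalSpace A]
    [CompactSpace S] [CompactSpace A] [Nonempty S] [Nonempty A]
    (Astar Ahat : S × A → ℝ)
    (hAstar_cont : Continuous Astar) (hAhat_cont : Continuous Ahat)
    (hAstar_nonneg : ∀ p : S × A, 0 ≤ Astar p)
    (hAhat_nonneg : ∀ p : S × A, 0 ≤ Ahat p)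
    (hAstar_zero : ∀ s : S, ∃ a : A, Astar (s, a) = 0)
    (hAhat_zero : ∀ s : S, ∃ a : A, Ahat (s, a) = 0) :
    (∃ α : ℝ → ℝ, IsClassK α ∧ ∀ p : S × A, α (Astar p) ≤ Ahat p) ↔
      (∀ s : S, {a : A | Ahat (s, a) = 0} ⊆ {a : A | Astar (s, a) = 0}) := by
  constructor
  · rintro ⟨α, ⟨hα0, hαmono⟩, hle⟩ s a ha
    simp only [Set.mem_setOf_eq] at ha ⊢
    by_contra h
    have hpos : 0 < Astar (s, a) := lt_of_le_of_ne (hAstar_nonneg _) (Ne.symm h)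
    have hmono := hαmono Set.self_mem_Ici (Set.mem_Ici.mpr (hAstar_nonneg (s, a))) hpos
    rw [hα0] at hmono
    have h2 := hle (s, a)
    rw [ha] at h2
    linarith
  · intro hsub
    obtain ⟨pM, -, hpM⟩ :=
      isCompact_univ.exists_isMaxOn Set.univ_nonempty hAstar_cont.continuousOn
    set M := Astar pM with hMdef
    have hpM' : ∀ q, Astar q ≤ M := fun q => hpM (Set.mem_univ q)
    by_cases hMpos : 0 < M
    · set m : ℝ → ℝ := fun r => sInf (Ahat '' {p | min r M ≤ Astar p}) with hmdef
      have hCne : ∀ r, ({p : S × A | min r M ≤ Astar p}).Nonempty :=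
        fun r => ⟨pM, min_le_right r M⟩
      have hbdd : ∀ r, BddBelow (Ahat '' {p : S × A | min r M ≤ Astar p}) := by
        intro r
        refine ⟨0, ?_⟩
        rintro x ⟨p, -, rfl⟩
        exact hAhat_nonneg p
      have hmono : ∀ ⦃r r' : ℝ⦄, r ≤ r' → m r ≤ m r' := by
        intro r r' hrr'
        apply csInf_le_csInf (hbdd r) ((hCne r').image _)
        apply Set.image_mono
        intro p hp
        exact le_trans (min_le_min hrr' le_rfl) hp
      have hmpos : ∀ r : ℝ, 0 < r → 0 < m r := by
        intro r hr
        have hC : IsCompact {p : S × A | min r M ≤ Astar p} :=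
          (isClosed_le continuous_const hAstar_cont).isCompact
        obtain ⟨p0, hp0mem, hp0min⟩ := hC.exists_isMinOn (hCne r) hAhat_cont.continuousOn
        have h0 : 0 < Ahat p0 := by
          rcases lt_or_eq_of_le (hAhat_nonneg p0) with h | h
          · exact h
          · exfalso
            have hz : Astar (p0.1, p0.2) = 0 := hsub p0.1 (by simp [← h])
            rw [Prod.mk.eta] at hz
            have : (0 : ℝ) < min r M := lt_min hr hMpos
            have := hp0mem
            simp only [Set.mem_setOf_eq, hz] at this
            linarith
        refine lt_of_lt_of_le h0 ?_
        apply le_csInf ((hCne r).image _)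
        rintro x ⟨p, hp, rfl⟩
        exact hp0min hp
      refine ⟨fun r => if r ≤ 0 then r else r / (1 + r) * m r, ⟨by simp, ?_⟩, ?_⟩
      · intro a ha b hb hab
        simp only [Set.mem_Ici] at ha hb
        beta_reduce
        have hbpos : 0 < b := lt_of_le_of_lt ha hab
        rw [if_neg (not_le.mpr hbpos)]
        rcases eq_or_lt_of_le ha with h0 | hapos
        · rw [if_pos (le_of_eq h0.symm), ← h0]
          exact mul_pos (div_pos hbpos (by linarith)) (hmpos b hbpos)
        · rw [if_neg (not_le.mpr hapos)]
          have h1 : a / (1 + a) * m a ≤ a / (1 + a) * m b :=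
            mul_le_mul_of_nonneg_left (hmono hab.le) (le_of_lt (div_pos hapos (by linarith)))
          have h2 : a / (1 + a) < b / (1 + b) := by
            rw [div_lt_div_iff₀ (by linarith) (by linarith)]
            nlinarith
          have h3 : a / (1 + a) * m b < b / (1 + b) * m b :=
            mul_lt_mul_of_pos_right h2 (hmpos b hbpos)
          linarith
      · intro p
        beta_reduce
        by_cases hp : Astar p ≤ 0
        · rw [if_pos hp]
          exact le_trans hp (hAhat_nonneg p)
        · push_neg at hp
          rw [if_neg (not_le.mpr hp)]
          have hmem : p ∈ {q : S × A | min (Astar p) M ≤ Astar q} :=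
            Set.mem_setOf_eq ▸ min_le_left _ _
          have h1 : m (Astar p) ≤ Ahat p := csInf_le (hbdd _) ⟨p, hmem, rfl⟩
          have h2 : Astar p / (1 + Astar p) ≤ 1 := by
            rw [div_le_one (by linarith)]; linarith
          calc Astar p / (1 + Astar p) * m (Astar p)
              ≤ 1 * m (Astar p) :=
                mul_le_mul_of_nonneg_right h2 (le_of_lt (hmpos _ hp))
            _ = m (Astar p) := one_mul _
            _ ≤ Ahat p := h1
    · refine ⟨id, ⟨rfl, fun a _ b _ h => h⟩, fun p => ?_⟩
      have : Astar p = 0 := le_antisymm (le_trans (hpM' p) (not_lt.mp hMpos)) (hAstar_nonneg p)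
      simp only [id, this]
      exact hAhat_nonneg p
end

section
/- Let Ā := max_{(s,a) ∈ S×A} A⋆(s,a) (attained by compactness and continuity), and for x ∈ [0, Ā] define α₀(x) := min { Â(s,a) : (s,a) ∈ S × A, A⋆(s,a) ≥ x } (this minimum is attained since the constraint set is a nonempty compact set and Â is continuous). Assume that for every s ∈ S the set {a : Â(s,a) = 0} is contained in {a : A⋆(s,a) = 0}. Then: (1) α₀(0) = 0; (2) α₀(x) > 0 for every x ∈ (0, Ā]; (3) α₀ is monotone nondecreasing on [0, Ā]; (4) Â(s,a) ≥ α₀(A⋆(s,a)) for all (s,a) ∈ S × A. -/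
section SuperlevelMinimum

variable {X : Type*} {f g : X → ℝ}

theorem monotoneOn_of_isLeast_image_superlevel {α : ℝ → ℝ} {s : Set ℝ}
    (hα : ∀ x ∈ s, IsLeast (g '' {p | x ≤ f p}) (α x)) : MonotoneOn α s :=
  fun x hx y hy hxy => (hα y hy).mono (hα x hx) (Set.image_mono fun _ hp => hxy.trans hp)

theorem IsLeast.pos_of_image_superlevel {x m : ℝ} (hx : 0 < x) (hg : ∀ p, 0 ≤ g p)
    (hfg : ∀ p, g p = 0 → f p = 0) (h : IsLeast (g '' {p | x ≤ f p}) m) : 0 < m := by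
  obtain ⟨p, hp, rfl⟩ := h.1
  refine (hg p).lt_of_ne fun hgp => ?_
  have hfp : f p = 0 := hfg p hgp.symm
  exact hx.not_ge (hfp ▸ hp)

theorem IsLeast.eq_zero_of_image_superlevel_zero {m : ℝ} (hf : ∀ p, 0 ≤ f p)
    (hg : ∀ p, 0 ≤ g p) (hg₀ : ∃ p, g p = 0) (h : IsLeast (g '' {p | 0 ≤ f p}) m) : m = 0 := by
  obtain ⟨p, hp⟩ := hg₀
  have hzero : IsLeast (g '' {p | 0 ≤ f p}) 0 :=
    ⟨⟨p, hf p, hp⟩, by rintro _ ⟨q, -, rfl⟩; exact hg q⟩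
  exact h.unique hzero

end SuperlevelMinimum

theorem stmt_3_general {S A : Type*}
    (Astar Ahat : S × A → ℝ)
    (hAstar_nonneg : ∀ p : S × A, 0 ≤ Astar p)
    (hAhat_nonneg : ∀ p : S × A, 0 ≤ Ahat p)
    (hAhat_zero : ∀ s : S, ∃ a : A, Ahat (s, a) = 0)
    (hsubset : ∀ s : S, {a : A | Ahat (s, a) = 0} ⊆ {a : A | Astar (s, a) = 0})
    (Abar : ℝ) (hAbar : IsGreatest (Set.range Astar) Abar)
    (α₀ : ℝ → ℝ)
    (hα₀ : ∀ x ∈ Set.Icc (0 : ℝ) Abar,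
      IsLeast (Ahat '' {p : S × A | x ≤ Astar p}) (α₀ x)) :
    α₀ 0 = 0 ∧
      (∀ x ∈ Set.Ioc (0 : ℝ) Abar, 0 < α₀ x) ∧
      MonotoneOn α₀ (Set.Icc (0 : ℝ) Abar) ∧
      (∀ p : S × A, α₀ (Astar p) ≤ Ahat p) := by
  obtain ⟨p₀, hp₀⟩ := hAbar.1
  have hAbar_nonneg : 0 ≤ Abar := hp₀ ▸ hAstar_nonneg p₀
  obtain ⟨a₀, ha₀⟩ := hAhat_zero p₀.1
  refine ⟨?_, ?_, monotoneOn_of_isLeast_image_superlevel hα₀, ?_⟩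
  · exact (hα₀ 0 ⟨le_rfl, hAbar_nonneg⟩).eq_zero_of_image_superlevel_zero
      hAstar_nonneg hAhat_nonneg ⟨_, ha₀⟩
  · exact fun x hx => (hα₀ x (Set.Ioc_subset_Icc_self hx)).pos_of_image_superlevel hx.1
      hAhat_nonneg fun p hp => hsubset p.1 hp
  · intro p
    exact (hα₀ _ ⟨hAstar_nonneg p, hAbar.2 ⟨p, rfl⟩⟩).2 ⟨p, le_refl (Astar p), rfl⟩

/-- with `Ā` the (attained) maximum of `A⋆` over `S × A`, and
`α₀(x)` the (attained) minimum of `Â` over `{(s,a) : A⋆(s,a) ≥ x}` for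
`x ∈ [0, Ā]`, assuming the zeros of `Â(s,·)` are contained in the zeros of
`A⋆(s,·)` for every `s`, the function `α₀` satisfies:
(1) `α₀(0) = 0`; (2) `α₀(x) > 0` on `(0, Ā]`; (3) `α₀` is monotone
nondecreasing on `[0, Ā]`; (4) `Â(s,a) ≥ α₀(A⋆(s,a))` for all `(s,a)`. -/
theorem stmt_3 {S A : Type*} [TopologicalSpace S] [TopologicalSpace A]
    [CompactSpace S] [CompactSpace A] [Nonempty S] [Nonempty A]
    (Astar Ahat : S × A → ℝ)
    (hAstar_cont : Continuous Astar) (hAhat_cont : Continuous Ahat)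
    (hAstar_nonneg : ∀ p : S × A, 0 ≤ Astar p)
    (hAhat_nonneg : ∀ p : S × A, 0 ≤ Ahat p)
    (hAstar_zero : ∀ s : S, ∃ a : A, Astar (s, a) = 0)
    (hAhat_zero : ∀ s : S, ∃ a : A, Ahat (s, a) = 0)
    (hsubset : ∀ s : S, {a : A | Ahat (s, a) = 0} ⊆ {a : A | Astar (s, a) = 0})
    (Abar : ℝ) (hAbar : IsGreatest (Set.range Astar) Abar)
    (α₀ : ℝ → ℝ)
    (hα₀ : ∀ x ∈ Set.Icc (0 : ℝ) Abar,
      IsLeast (Ahat '' {p : S × A | x ≤ Astar p}) (α₀ x)) :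
    α₀ 0 = 0 ∧
      (∀ x ∈ Set.Ioc (0 : ℝ) Abar, 0 < α₀ x) ∧
      MonotoneOn α₀ (Set.Icc (0 : ℝ) Abar) ∧
      (∀ p : S × A, α₀ (Astar p) ≤ Ahat p) :=
  stmt_3_general Astar Ahat hAstar_nonneg hAhat_nonneg hAhat_zero hsubset Abar hAbar α₀ hα₀
end

section
/- The following two conditions are equivalent: (i) there exists a class 𝒦 function β : [0,∞) → [0,∞) such that β(A⋆(s,a)) ≥ Â(s,a) for all (s,a) ∈ S × A; (ii) for every s ∈ S, the set {a ∈ A : A⋆(s,a) = 0} is contained in {a ∈ A : Â(s,a) = 0}, i.e., argmin_a A⋆(s,a) ⊆ argmin_a Â(s,a) for every s. (Lemma 2.) -/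
/-! A comparison function is read off from the sublevel sets of `A⋆`: `β r` is the supremum of `Â`
over `{A⋆ ≤ r}` (bounded by compactness and continuity), plus `r` to make it strictly increasing.
It vanishes at `0` exactly because the zeros of `A⋆` are zeros of `Â`. -/

section SublevelSup

variable {X : Type*} (f g : X → ℝ)

/-- The `0` in the set keeps it nonempty, so `sSup` is monotone in `r` even where `{f ≤ r}` is empty. -/
noncomputable def sublevelSup (r : ℝ) : ℝ :=
  sSup (insert 0 (g '' {x | f x ≤ r}))

variable {f g}

lemma bddAbove_insert_image_sublevel (hg : BddAbove (Set.range g)) (r : ℝ) :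
    BddAbove (insert 0 (g '' {x | f x ≤ r})) :=
  (hg.mono (Set.image_subset_range g _)).insert 0

lemma le_sublevelSup (hg : BddAbove (Set.range g)) {x : X} {r : ℝ} (hx : f x ≤ r) :
    g x ≤ sublevelSup f g r :=
  le_csSup (bddAbove_insert_image_sublevel hg r) (Set.mem_insert_of_mem 0 ⟨x, hx, rfl⟩)

lemma sublevelSup_mono (hg : BddAbove (Set.range g)) : Monotone (sublevelSup f g) :=
  fun _ r hrs => csSup_le_csSup (bddAbove_insert_image_sublevel hg r) (Set.insert_nonempty _ _)
    (Set.insert_subset_insert (Set.image_mono fun _ hx => le_trans hx hrs))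

lemma sublevelSup_zero (hf : ∀ x, 0 ≤ f x) (hfg : ∀ x, f x = 0 → g x ≤ 0) :
    sublevelSup f g 0 = 0 := by
  refine IsGreatest.csSup_eq ⟨Set.mem_insert 0 _, ?_⟩
  rintro _ (rfl | ⟨x, hx, rfl⟩)
  · exact le_rfl
  · exact hfg x (le_antisymm hx (hf x))

theorem exists_isClassK_le_comp (hf : ∀ x, 0 ≤ f x) (hg : BddAbove (Set.range g))
    (hfg : ∀ x, f x = 0 → g x ≤ 0) :
    ∃ β : ℝ → ℝ, IsClassK β ∧ ∀ x, g x ≤ β (f x) := by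
  refine ⟨fun r => sublevelSup f g r + r, ⟨by simp [sublevelSup_zero hf hfg], ?_⟩, fun x => ?_⟩
  · intro r _ s _ hrs
    exact add_lt_add_of_le_of_lt (sublevelSup_mono hg hrs.le) hrs
  · linarith [le_sublevelSup hg (le_refl (f x)), hf x]

end SublevelSup

theorem stmt_6_general {S A : Type*} [TopologicalSpace S] [TopologicalSpace A]
    [CompactSpace S] [CompactSpace A]
    (Astar Ahat : S × A → ℝ)
    (hAhat_cont : Continuous Ahat)
    (hAstar_nonneg : ∀ p : S × A, 0 ≤ Astar p)
    (hAhat_nonneg : ∀ p : S × A, 0 ≤ Ahat p) :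
    (∃ β : ℝ → ℝ, IsClassK β ∧ ∀ p : S × A, Ahat p ≤ β (Astar p)) ↔
      (∀ s : S, {a : A | Astar (s, a) = 0} ⊆ {a : A | Ahat (s, a) = 0}) := by
  constructor
  · rintro ⟨β, ⟨hβ0, -⟩, hβ⟩ s a (ha : Astar (s, a) = 0)
    have hle : Ahat (s, a) ≤ 0 := by simpa [ha, hβ0] using hβ (s, a)
    exact le_antisymm hle (hAhat_nonneg (s, a))
  · intro h
    refine exists_isClassK_le_comp hAstar_nonneg (isCompact_range hAhat_cont).bddAbove ?_
    rintro ⟨s, a⟩ hz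
    exact (h s hz).le

/-- Lemma 2: there exists a class `𝒦` function `β` with
`β(A⋆(s,a)) ≥ Â(s,a)` for all `(s,a)` iff for every `s` the zeros (minimizers)
of `A⋆(s,·)` are contained in the zeros (minimizers) of `Â(s,·)`. -/
theorem stmt_6 {S A : Type*} [TopologicalSpace S] [TopologicalSpace A]
    [CompactSpace S] [CompactSpace A] [Nonempty S] [Nonempty A]
    (Astar Ahat : S × A → ℝ)
    (hAstar_cont : Continuous Astar) (hAhat_cont : Continuous Ahat)
    (hAstar_nonneg : ∀ p : S × A, 0 ≤ Astar p)
    (hAhat_nonneg : ∀ p : S × A, 0 ≤ Ahat p)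
    (hAstar_zero : ∀ s : S, ∃ a : A, Astar (s, a) = 0)
    (hAhat_zero : ∀ s : S, ∃ a : A, Ahat (s, a) = 0) :
    (∃ β : ℝ → ℝ, IsClassK β ∧ ∀ p : S × A, Ahat p ≤ β (Astar p)) ↔
      (∀ s : S, {a : A | Astar (s, a) = 0} ⊆ {a : A | Ahat (s, a) = 0}) :=
  stmt_6_general Astar Ahat hAhat_cont hAstar_nonneg hAhat_nonneg
end

section
/- The following two conditions are equivalent: (i) there exist class 𝒦 functions α, β : [0,∞) → [0,∞) such that β(A⋆(s,a)) ≥ Â(s,a) ≥ α(A⋆(s,a)) for all (s,a) ∈ S × A; (ii) for every s ∈ S, the set {a ∈ A : Â(s,a) = 0} equals the set {a ∈ A : A⋆(s,a) = 0}, i.e., argmin_a Â(s,a) = argmin_a A⋆(s,a) for every s. (Corollary 1.) -/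
open Set

namespace IsClassK

variable {α : ℝ → ℝ}

lemma pos (hα : IsClassK α) {r : ℝ} (hr : 0 < r) : 0 < α r :=
  hα.1 ▸ hα.2 self_mem_Ici hr.le hr

lemma nonpos_iff (hα : IsClassK α) {r : ℝ} (hr : 0 ≤ r) : α r ≤ 0 ↔ r = 0 := by
  refine ⟨fun h => ?_, fun h => h ▸ hα.1.le⟩
  by_contra hne
  exact (hα.pos (lt_of_le_of_ne hr (Ne.symm hne))).not_ge h

end IsClassK

lemma isClassK_id : IsClassK id :=
  ⟨rfl, strictMono_id.strictMonoOn _⟩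

lemma isClassK_add_of_monotoneOn {φ : ℝ → ℝ} (hmono : MonotoneOn φ (Ici 0)) (h0 : φ 0 = 0) :
    IsClassK fun r => r + φ r :=
  ⟨by simp [h0], fun _ ha _ hb hab => add_lt_add_of_lt_of_le hab (hmono ha hb hab.le)⟩

lemma isClassK_div_add_one_mul_of_monotoneOn {ψ : ℝ → ℝ} (hmono : MonotoneOn ψ (Ici 0))
    (hpos : ∀ r > 0, 0 < ψ r) : IsClassK fun r => r / (r + 1) * ψ r := by
  refine ⟨by simp, fun a (ha : 0 ≤ a) b (hb : 0 ≤ b) hab => ?_⟩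
  have hfrac : a / (a + 1) < b / (b + 1) := by
    rw [div_lt_div_iff₀ (by linarith) (by linarith)]
    linarith
  calc a / (a + 1) * ψ a ≤ a / (a + 1) * ψ b :=
        mul_le_mul_of_nonneg_left (hmono ha hb hab.le) (by positivity)
    _ < b / (b + 1) * ψ b := mul_lt_mul_of_pos_right hfrac (hpos b (ha.trans_lt hab))

section Envelopes

variable {X : Type*} {f g : X → ℝ}

lemma eq_zero_iff_of_classK_sandwich {α β : ℝ → ℝ} (hα : IsClassK α) (hβ : IsClassK β)
    (hf : ∀ x, 0 ≤ f x) (hg : ∀ x, 0 ≤ g x) (hbound : ∀ x, α (f x) ≤ g x ∧ g x ≤ β (f x))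
    (x : X) : g x = 0 ↔ f x = 0 := by
  constructor
  · intro hgx
    exact (hα.nonpos_iff (hf x)).1 (hgx ▸ (hbound x).1)
  · intro hfx
    have := (hbound x).2
    rw [hfx, hβ.1] at this
    exact le_antisymm this (hg x)

lemma exists_classK_le [TopologicalSpace X] [CompactSpace X] (hfc : Continuous f)
    (hgc : Continuous g) (hg : ∀ x, 0 ≤ g x) (hzero : ∀ x, g x = 0 → f x = 0) :
    ∃ α, IsClassK α ∧ ∀ x, 0 ≤ f x → α (f x) ≤ g x := by
  cases isEmpty_or_nonempty X
  · exact ⟨id, isClassK_id, fun x => isEmptyElim x⟩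
  set ψ : ℝ → ℝ := fun r => ⨅ x, (g x + max (r - f x) 0)
  have hbdd (r : ℝ) : BddBelow (range fun x => g x + max (r - f x) 0) :=
    ⟨0, forall_mem_range.2 fun x => add_nonneg (hg x) (le_max_right _ _)⟩
  have hmono : Monotone ψ := fun a b hab =>
    ciInf_mono (hbdd a) fun x => by gcongr
  have hpos (r : ℝ) (hr : 0 < r) : 0 < ψ r := by
    have hterm_pos (x : X) : 0 < g x + max (r - f x) 0 := by
      rcases (hg x).eq_or_lt with hgx | hgx
      · simp [← hgx, hzero x hgx.symm, hr]
      · exact add_pos_of_pos_of_nonneg hgx (le_max_right _ _)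
    obtain ⟨c, hc, hcle⟩ := isCompact_univ.exists_forall_le'
      (by fun_prop : Continuous fun x => g x + max (r - f x) 0).continuousOn
      fun x _ => hterm_pos x
    exact hc.trans_le (le_ciInf fun x => hcle x (mem_univ x))
  refine ⟨_, isClassK_div_add_one_mul_of_monotoneOn (hmono.monotoneOn _) hpos,
    fun x hfx => ?_⟩
  have hψ : ψ (f x) ≤ g x := by
    simpa using ciInf_le (hbdd (f x)) x
  have hψ_nonneg : 0 ≤ ψ (f x) := Real.iInf_nonneg fun y => add_nonneg (hg y) (le_max_right _ _)
  have hfrac : f x / (f x + 1) ≤ 1 := by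
    rw [div_le_one (by linarith)]
    linarith
  calc f x / (f x + 1) * ψ (f x) ≤ 1 * ψ (f x) := by gcongr
    _ ≤ g x := by rwa [one_mul]

lemma exists_classK_ge (hbdd : BddAbove (range g)) (hf : ∀ x, 0 ≤ f x) (hg : ∀ x, 0 ≤ g x)
    (hzero : ∀ x, f x = 0 → g x = 0) : ∃ β, IsClassK β ∧ ∀ x, g x ≤ β (f x) := by
  set φ : ℝ → ℝ := fun r => sSup (g '' {x | f x ≤ r})
  have hbdd' (r : ℝ) : BddAbove (g '' {x | f x ≤ r}) := hbdd.mono (image_subset_range _ _)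
  have hφ_nonneg (r : ℝ) : 0 ≤ φ r := Real.sSup_nonneg (forall_mem_image.2 fun x _ => hg x)
  have hmono : MonotoneOn φ (Ici 0) := by
    intro a _ b _ hab
    rcases (g '' {x | f x ≤ a}).eq_empty_or_nonempty with hempty | hne
    · simpa [φ, hempty] using hφ_nonneg b
    · exact csSup_le_csSup (hbdd' b) hne (image_mono fun x (hx : f x ≤ a) => hx.trans hab)
  have hφ0 : φ 0 = 0 := by
    refine le_antisymm (Real.sSup_le (forall_mem_image.2 fun x (hx : f x ≤ 0) => ?_) le_rfl)
      (hφ_nonneg 0)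
    exact (hzero x (le_antisymm hx (hf x))).le
  refine ⟨_, isClassK_add_of_monotoneOn hmono hφ0, fun x => ?_⟩
  calc g x ≤ φ (f x) := le_csSup (hbdd' _) (mem_image_of_mem g (le_refl (f x)))
    _ ≤ f x + φ (f x) := le_add_of_nonneg_left (hf x)

end Envelopes

theorem stmt_7_general {S A : Type*} [TopologicalSpace S] [TopologicalSpace A]
    [CompactSpace S] [CompactSpace A]
    (Astar Ahat : S × A → ℝ)
    (hAstar_cont : Continuous Astar) (hAhat_cont : Continuous Ahat)
    (hAstar_nonneg : ∀ p : S × A, 0 ≤ Astar p)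
    (hAhat_nonneg : ∀ p : S × A, 0 ≤ Ahat p) :
    (∃ α β : ℝ → ℝ, IsClassK α ∧ IsClassK β ∧
        ∀ p : S × A, α (Astar p) ≤ Ahat p ∧ Ahat p ≤ β (Astar p)) ↔
      (∀ s : S, {a : A | Ahat (s, a) = 0} = {a : A | Astar (s, a) = 0}) := by
  constructor
  · rintro ⟨α, β, hα, hβ, hbound⟩ s
    ext a
    exact eq_zero_iff_of_classK_sandwich hα hβ hAstar_nonneg hAhat_nonneg hbound (s, a)
  · intro h
    have hzero (p : S × A) : Ahat p = 0 ↔ Astar p = 0 := Set.ext_iff.1 (h p.1) p.2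
    obtain ⟨α, hα, hαle⟩ :=
      exists_classK_le hAstar_cont hAhat_cont hAhat_nonneg fun p => (hzero p).1
    obtain ⟨β, hβ, hβge⟩ := exists_classK_ge (isCompact_range hAhat_cont).bddAbove
      hAstar_nonneg hAhat_nonneg fun p => (hzero p).2
    exact ⟨α, β, hα, hβ, fun p => ⟨hαle p (hAstar_nonneg p), hβge p⟩⟩

/-- Corollary 1: there exist class `𝒦` functions `α, β` with
`β(A⋆(s,a)) ≥ Â(s,a) ≥ α(A⋆(s,a))` for all `(s,a)` iff for every `s` the zeros
(minimizers) of `Â(s,·)` coincide with the zeros (minimizers) of `A⋆(s,·)`. -/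
theorem stmt_7 {S A : Type*} [TopologicalSpace S] [TopologicalSpace A]
    [CompactSpace S] [CompactSpace A] [Nonempty S] [Nonempty A]
    (Astar Ahat : S × A → ℝ)
    (hAstar_cont : Continuous Astar) (hAhat_cont : Continuous Ahat)
    (hAstar_nonneg : ∀ p : S × A, 0 ≤ Astar p)
    (hAhat_nonneg : ∀ p : S × A, 0 ≤ Ahat p)
    (hAstar_zero : ∀ s : S, ∃ a : A, Astar (s, a) = 0)
    (hAhat_zero : ∀ s : S, ∃ a : A, Ahat (s, a) = 0) :
    (∃ α β : ℝ → ℝ, IsClassK α ∧ IsClassK β ∧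
        ∀ p : S × A, α (Astar p) ≤ Ahat p ∧ Ahat p ≤ β (Astar p)) ↔
      (∀ s : S, {a : A | Ahat (s, a) = 0} = {a : A | Astar (s, a) = 0}) :=
  stmt_7_general Astar Ahat hAstar_cont hAhat_cont hAstar_nonneg hAhat_nonneg
end

section
/- Define the true advantage A⋆(s,a) := L(s,a) + γ ∫ V⋆(s₊) dρ(s₊ | s,a) − V⋆(s) and the model-based advantage Â_λ(s,a) := L(s,a) + Λ(s,a) + γ ∫ V⋆(s₊) dρ̂(s₊ | s,a) − V⋆(s). Assume A⋆ and Â_λ are continuous and nonnegative on S × A, and that for every s ∈ S there exist a, a' ∈ A with A⋆(s,a) = 0 and Â_λ(s,a') = 0. Then the following are equivalent: (i) there exist class 𝒦 functions α, β : [0,∞) → [0,∞) such that β(A⋆(s,a)) ≥ Â_λ(s,a) ≥ α(A⋆(s,a)) for all (s,a) ∈ S × A; (ii) for every s ∈ S, {a ∈ A : Â_λ(s,a) = 0} = {a ∈ A : A⋆(s,a) = 0}, i.e., the model-based MDP yields exactly the optimal policies of the true MDP. (Theorem 1.) -/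
/-!
For nonnegative `f` and `g` vanishing at the same points of a compact space, the upper
comparison function is `r ↦ sup {g x | f x ≤ r}`, which vanishes at `0`, and the lower one
is `t ↦ inf {g x | t ≤ f x}`, which is positive for `t > 0` because on the compact set
`{t ≤ f}` the continuous `g` attains its infimum at a point where it cannot vanish.
Both are monotone; adding `r`, resp. multiplying by `t / (t + 1)`, makes them strictly
increasing without breaking the comparison.
-/

open MeasureTheory

open Set

theorem IsClassK.eq_zero_of_nonpos {α : ℝ → ℝ} (hα : IsClassK α) {t : ℝ} (ht : 0 ≤ t)
    (h : α t ≤ 0) : t = 0 := by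
  by_contra hne
  have := hα.2 self_mem_Ici ht (lt_of_le_of_ne ht (Ne.symm hne))
  linarith [hα.1]

theorem exists_isClassK_le_of_monotoneOn {m : ℝ → ℝ} (hm : MonotoneOn m (Ici 0))
    (hpos : ∀ t, 0 < t → 0 < m t) : ∃ α, IsClassK α ∧ ∀ t, 0 < t → α t ≤ m t := by
  refine ⟨fun t => t / (t + 1) * m t, ⟨by simp, ?_⟩, fun t ht => ?_⟩
  · intro x hx y hy hxy
    have hx1 : 0 < x + 1 := by linarith [mem_Ici.mp hx]
    have hy1 : 0 < y + 1 := by linarith [mem_Ici.mp hy]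
    have hy0 : 0 < y := lt_of_le_of_lt hx hxy
    rcases (mem_Ici.mp hx).eq_or_lt with rfl | hx0
    · simpa using mul_pos (div_pos hy0 hy1) (hpos y hy0)
    · calc x / (x + 1) * m x < y / (y + 1) * m x := by
            gcongr ?_ * _
            · exact hpos x hx0
            · rw [div_lt_div_iff₀ hx1 hy1]; linarith
        _ ≤ y / (y + 1) * m y := by
            gcongr
            exact hm hx hy hxy.le
  · exact mul_le_of_le_one_left (hpos t ht).le ((div_le_one (by linarith)).mpr (by linarith))

theorem exists_isClassK_ge_of_monotoneOn {M : ℝ → ℝ} (hM : MonotoneOn M (Ici 0))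
    (hM0 : M 0 ≤ 0) : ∃ β, IsClassK β ∧ ∀ t, 0 ≤ t → M t ≤ β t := by
  refine ⟨fun t => M t - M 0 + t, ⟨by simp, fun x hx y hy hxy => ?_⟩,
    fun t ht => by linarith⟩
  have := hM hx hy hxy.le
  simp only
  linarith

section Comparison

variable {X : Type*} {f g : X → ℝ}

theorem exists_isClassK_le_comp_s9 [TopologicalSpace X] [CompactSpace X] (hf : Continuous f)
    (hg : Continuous g) (hf0 : ∀ x, 0 ≤ f x) (hg0 : ∀ x, 0 ≤ g x)
    (hgf : ∀ x, g x = 0 → f x = 0) : ∃ α, IsClassK α ∧ ∀ x, α (f x) ≤ g x := by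
  -- `sInf ∅ = 0` in `ℝ`; inserting `1` keeps `m t` positive when `{t ≤ f}` is empty
  set m : ℝ → ℝ := fun t => sInf (insert 1 (g '' {x | t ≤ f x}))
  have hbdd : ∀ t, BddBelow (insert 1 (g '' {x | t ≤ f x})) := fun t =>
    ⟨0, forall_mem_insert.mpr ⟨zero_le_one, forall_mem_image.mpr fun x _ => hg0 x⟩⟩
  have hm_mono : Monotone m := fun s t hst =>
    csInf_le_csInf (hbdd s) (insert_nonempty _ _)
      (insert_subset_insert (image_mono fun x hx => hst.trans hx))
  have hm_pos : ∀ t, 0 < t → 0 < m t := by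
    intro t ht
    show 0 < sInf _
    have hK : IsCompact (insert 1 (g '' {x | t ≤ f x})) :=
      ((isClosed_le continuous_const hf).isCompact.image hg).insert 1
    rcases hK.sInf_mem (insert_nonempty _ _) with h1 | ⟨x, hx, hgx⟩
    · rw [h1]; exact one_pos
    · rw [← hgx]
      have htx : t ≤ f x := hx
      refine (hg0 x).lt_of_ne fun h => ?_
      linarith [hgf x h.symm]
  obtain ⟨α, hα, hαm⟩ := exists_isClassK_le_of_monotoneOn (hm_mono.monotoneOn _) hm_pos
  refine ⟨α, hα, fun x => ?_⟩
  rcases (hf0 x).eq_or_lt with h0 | hpos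
  · rw [← h0, hα.1]; exact hg0 x
  · have hx : x ∈ {y | f x ≤ f y} := le_refl (f x)
    exact (hαm _ hpos).trans (csInf_le (hbdd _) (mem_insert_of_mem _ (mem_image_of_mem g hx)))

theorem exists_isClassK_ge_comp (hg : BddAbove (range g)) (hf0 : ∀ x, 0 ≤ f x)
    (hfg : ∀ x, f x = 0 → g x = 0) : ∃ β, IsClassK β ∧ ∀ x, g x ≤ β (f x) := by
  set M : ℝ → ℝ := fun r => sSup (insert 0 (g '' {x | f x ≤ r}))
  have hbdd : ∀ r, BddAbove (insert 0 (g '' {x | f x ≤ r})) := fun r =>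
    (hg.mono (image_subset_range g _)).insert 0
  have hM_mono : Monotone M := fun r s hrs =>
    csSup_le_csSup (hbdd s) (insert_nonempty _ _)
      (insert_subset_insert (image_mono fun x hx => le_trans hx hrs))
  have hM0 : M 0 ≤ 0 := by
    refine csSup_le (insert_nonempty _ _) (forall_mem_insert.mpr ⟨le_rfl, ?_⟩)
    rintro _ ⟨x, hx, rfl⟩
    exact (hfg x (le_antisymm hx (hf0 x))).le
  obtain ⟨β, hβ, hMβ⟩ := exists_isClassK_ge_of_monotoneOn (hM_mono.monotoneOn _) hM0
  refine ⟨β, hβ, fun x => ?_⟩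
  have hx : x ∈ {y | f y ≤ f x} := le_refl (f x)
  exact (le_csSup (hbdd _) (mem_insert_of_mem _ (mem_image_of_mem g hx))).trans (hMβ _ (hf0 x))

theorem zero_iff_of_isClassK_sandwich {α β : ℝ → ℝ} (hα : IsClassK α) (hβ : IsClassK β)
    (hf0 : ∀ x, 0 ≤ f x) (hg0 : ∀ x, 0 ≤ g x)
    (h : ∀ x, α (f x) ≤ g x ∧ g x ≤ β (f x)) (x : X) : g x = 0 ↔ f x = 0 := by
  constructor
  · intro hg
    exact hα.eq_zero_of_nonpos (hf0 x) (hg ▸ (h x).1)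
  · intro hf
    exact le_antisymm (hβ.1 ▸ hf ▸ (h x).2) (hg0 x)

theorem exists_isClassK_sandwich_iff [TopologicalSpace X] [CompactSpace X]
    (hf : Continuous f) (hg : Continuous g) (hf0 : ∀ x, 0 ≤ f x) (hg0 : ∀ x, 0 ≤ g x) :
    (∃ α β : ℝ → ℝ, IsClassK α ∧ IsClassK β ∧
        ∀ x, α (f x) ≤ g x ∧ g x ≤ β (f x)) ↔
      ∀ x, g x = 0 ↔ f x = 0 := by
  refine ⟨fun ⟨α, β, hα, hβ, h⟩ => zero_iff_of_isClassK_sandwich hα hβ hf0 hg0 h,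
    fun hfg => ?_⟩
  obtain ⟨α, hα, hαg⟩ := exists_isClassK_le_comp_s9 hf hg hf0 hg0 fun x => (hfg x).mp
  obtain ⟨β, hβ, hgβ⟩ :=
    exists_isClassK_ge_comp (isCompact_range hg).bddAbove hf0 fun x => (hfg x).mpr
  exact ⟨α, β, hα, hβ, fun x => ⟨hαg x, hgβ x⟩⟩

end Comparison

theorem stmt_9_general {S A : Type*}
    [TopologicalSpace S] [CompactSpace S]
    [TopologicalSpace A] [CompactSpace A]
    (Astar Ahat : S × A → ℝ)
    (hAstar_cont : Continuous Astar) (hAhat_cont : Continuous Ahat)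
    (hAstar_nonneg : ∀ p : S × A, 0 ≤ Astar p)
    (hAhat_nonneg : ∀ p : S × A, 0 ≤ Ahat p) :
    (∃ α β : ℝ → ℝ, IsClassK α ∧ IsClassK β ∧
        ∀ p : S × A, α (Astar p) ≤ Ahat p ∧ Ahat p ≤ β (Astar p)) ↔
      (∀ s : S, {a : A | Ahat (s, a) = 0} = {a : A | Astar (s, a) = 0}) := by
  rw [exists_isClassK_sandwich_iff hAstar_cont hAhat_cont hAstar_nonneg hAhat_nonneg]
  simp only [Set.ext_iff, Set.mem_ofPred_eq, Prod.forall]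

/-- Theorem 1: with the true advantage
`A⋆(s,a) = L(s,a) + γ ∫ V⋆ dρ(·|s,a) − V⋆(s)` and the model-based advantage
`Â_λ(s,a) = L(s,a) + Λ(s,a) + γ ∫ V⋆ dρ̂(·|s,a) − V⋆(s)`, where
`Λ(s,a) = λ(s) − γ ∫ λ dρ̂(·|s,a)`, both continuous, nonnegative, and attaining
`0` in every state, the sandwich bound by class `𝒦` functions
`β(A⋆) ≥ Â_λ ≥ α(A⋆)` holds iff the zero sets (minimizer sets) of `Â_λ(s,·)`
and `A⋆(s,·)` coincide for every `s`. -/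
theorem stmt_9 {S A : Type*}
    [TopologicalSpace S] [CompactSpace S] [MeasurableSpace S] [Nonempty S]
    [TopologicalSpace A] [CompactSpace A] [Nonempty A]
    (ρ ρhat : S × A → Measure S)
    (hρ : ∀ p, IsProbabilityMeasure (ρ p))
    (hρhat : ∀ p, IsProbabilityMeasure (ρhat p))
    (γ : ℝ) (hγ : γ ∈ Set.Ioo (0 : ℝ) 1)
    (L : S × A → ℝ)
    (Vstar lam : S → ℝ)
    (hVstar_meas : Measurable Vstar) (hlam_meas : Measurable lam)
    (hVstar_bdd : ∃ C : ℝ, ∀ s, |Vstar s| ≤ C)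
    (hlam_bdd : ∃ C : ℝ, ∀ s, |lam s| ≤ C)
    (Λ : S × A → ℝ)
    (hΛ : ∀ p : S × A, Λ p = lam p.1 - γ * ∫ sn, lam sn ∂(ρhat p))
    (Astar Ahat : S × A → ℝ)
    (hAstar : ∀ p : S × A,
      Astar p = L p + γ * (∫ sn, Vstar sn ∂(ρ p)) - Vstar p.1)
    (hAhat : ∀ p : S × A,
      Ahat p = L p + Λ p + γ * (∫ sn, Vstar sn ∂(ρhat p)) - Vstar p.1)
    (hAstar_cont : Continuous Astar) (hAhat_cont : Continuous Ahat)
    (hAstar_nonneg : ∀ p : S × A, 0 ≤ Astar p)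
    (hAhat_nonneg : ∀ p : S × A, 0 ≤ Ahat p)
    (hAstar_zero : ∀ s : S, ∃ a : A, Astar (s, a) = 0)
    (hAhat_zero : ∀ s : S, ∃ a : A, Ahat (s, a) = 0) :
    (∃ α β : ℝ → ℝ, IsClassK α ∧ IsClassK β ∧
        ∀ p : S × A, α (Astar p) ≤ Ahat p ∧ Ahat p ≤ β (Astar p)) ↔
      (∀ s : S, {a : A | Ahat (s, a) = 0} = {a : A | Astar (s, a) = 0}) :=
  stmt_9_general Astar Ahat hAstar_cont hAhat_cont hAstar_nonneg hAhat_nonneg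
end

section
/- Define the true advantage A⋆(s,a) := L(s,a) + γ ∫ V⋆(s₊) dρ(s₊ | s,a) − V⋆(s) and the MPC advantage Â_λ(s,a) := L(s,a) + Λ(s,a) + γ V⋆(f(s,a)) − V⋆(s), where Λ(s,a) := λ(s) − γ λ(f(s,a)). Assume A⋆ and Â_λ are continuous and nonnegative on S × A, and that for every s ∈ S there exist a, a' ∈ A with A⋆(s,a) = 0 and Â_λ(s,a') = 0. Then the following are equivalent: (i) there exist class 𝒦 functions α, β : [0,∞) → [0,∞) such that β(A⋆(s,a)) ≥ Â_λ(s,a) ≥ α(A⋆(s,a)) for all (s,a) ∈ S × A; (ii) for every s ∈ S, {a ∈ A : Â_λ(s,a) = 0} = {a ∈ A : A⋆(s,a) = 0}, i.e., the MPC scheme with deterministic prediction model f yields exactly the optimal policies of the true MDP. (Corollary 3, the necessary and sufficient condition on a deterministic MPC model.) -/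
open MeasureTheory

/-- Corollary 3: for a deterministic MPC prediction model
`f : S × A → S` (model transition law the Dirac measure at `f(s,a)`), with the
true advantage `A⋆(s,a) = L(s,a) + γ ∫ V⋆ dρ(·|s,a) − V⋆(s)` and the MPC
advantage `Â_λ(s,a) = L(s,a) + Λ(s,a) + γ V⋆(f(s,a)) − V⋆(s)`, where
`Λ(s,a) = λ(s) − γ λ(f(s,a))`, both continuous, nonnegative, and attaining `0`
in every state, the sandwich bound by class `𝒦` functions
`β(A⋆) ≥ Â_λ ≥ α(A⋆)` holds iff the zero sets (minimizer sets) of `Â_λ(s,·)`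
and `A⋆(s,·)` coincide for every `s`. -/
theorem stmt_11 {S A : Type*}
    [TopologicalSpace S] [CompactSpace S] [MeasurableSpace S] [Nonempty S]
    [TopologicalSpace A] [CompactSpace A] [Nonempty A]
    (ρ : S × A → Measure S)
    (hρ : ∀ p, IsProbabilityMeasure (ρ p))
    (f : S × A → S)
    (γ : ℝ) (hγ : γ ∈ Set.Ioo (0 : ℝ) 1)
    (L : S × A → ℝ)
    (Vstar lam : S → ℝ)
    (hVstar_meas : Measurable Vstar) (hlam_meas : Measurable lam)
    (hVstar_bdd : ∃ C : ℝ, ∀ s, |Vstar s| ≤ C)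
    (hlam_bdd : ∃ C : ℝ, ∀ s, |lam s| ≤ C)
    (Λ : S × A → ℝ)
    (hΛ : ∀ p : S × A, Λ p = lam p.1 - γ * lam (f p))
    (Astar Ahat : S × A → ℝ)
    (hAstar : ∀ p : S × A,
      Astar p = L p + γ * (∫ sn, Vstar sn ∂(ρ p)) - Vstar p.1)
    (hAhat : ∀ p : S × A,
      Ahat p = L p + Λ p + γ * Vstar (f p) - Vstar p.1)
    (hAstar_cont : Continuous Astar) (hAhat_cont : Continuous Ahat)
    (hAstar_nonneg : ∀ p : S × A, 0 ≤ Astar p)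
    (hAhat_nonneg : ∀ p : S × A, 0 ≤ Ahat p)
    (hAstar_zero : ∀ s : S, ∃ a : A, Astar (s, a) = 0)
    (hAhat_zero : ∀ s : S, ∃ a : A, Ahat (s, a) = 0) :
    (∃ α β : ℝ → ℝ, IsClassK α ∧ IsClassK β ∧
        ∀ p : S × A, α (Astar p) ≤ Ahat p ∧ Ahat p ≤ β (Astar p)) ↔
      (∀ s : S, {a : A | Ahat (s, a) = 0} = {a : A | Astar (s, a) = 0}) := by
  constructor
  · rintro ⟨α, β, hα, hβ, hbound⟩ s
    ext a
    simp only [Set.mem_setOf_eq]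
    constructor
    · intro h
      by_contra hne
      have hpos : 0 < Astar (s, a) := lt_of_le_of_ne (hAstar_nonneg _) (Ne.symm hne)
      have hlt := hα.2 Set.self_mem_Ici (Set.mem_Ici.mpr hpos.le) hpos
      rw [hα.1] at hlt
      have h1 := (hbound (s, a)).1
      linarith
    · intro h
      have h2 := (hbound (s, a)).2
      rw [h, hβ.1] at h2
      exact le_antisymm h2 (hAhat_nonneg _)
  · intro hzero
    have hiff : ∀ p : S × A, Ahat p = 0 ↔ Astar p = 0 := by
      rintro ⟨s, a⟩
      have := Set.ext_iff.mp (hzero s) a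
      simpa using this
    obtain ⟨C, hC⟩ := (isCompact_range hAhat_cont).bddAbove
    have hCub : ∀ p, Ahat p ≤ C := fun p => hC (Set.mem_range_self p)
    set B := C + 1 with hB
    have hBpos : 0 < B := by
      obtain ⟨p0⟩ := (inferInstance : Nonempty (S × A))
      have h1 := hAhat_nonneg p0
      have h2 := hCub p0
      linarith
    have hBgt : ∀ p, Ahat p < B := fun p => lt_of_le_of_lt (hCub p) (by simp [hB])
    -- the lower envelope m
    set m : ℝ → ℝ := fun t => sInf (insert B (Ahat '' {p | t ≤ Astar p})) with hm
    have hbelow : ∀ t : ℝ, ∀ x ∈ insert B (Ahat '' {p : S × A | t ≤ Astar p}), (0:ℝ) ≤ x := by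
      rintro t x (rfl | ⟨p, -, rfl⟩)
      · exact hBpos.le
      · exact hAhat_nonneg p
    have hbddb : ∀ t : ℝ, BddBelow (insert B (Ahat '' {p : S × A | t ≤ Astar p})) :=
      fun t => ⟨0, fun x hx => hbelow t x hx⟩
    have hm_nonneg : ∀ t, 0 ≤ m t := fun t =>
      le_csInf (Set.insert_nonempty _ _) (hbelow t)
    have hm_mono : ∀ {t1 t2 : ℝ}, t1 ≤ t2 → m t1 ≤ m t2 := by
      intro t1 t2 h
      exact csInf_le_csInf (hbddb t1) (Set.insert_nonempty _ _)
        (Set.insert_subset_insert (Set.image_mono (fun p hp => le_trans h hp)))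
    have hm_le : ∀ p : S × A, m (Astar p) ≤ Ahat p := fun p =>
      csInf_le (hbddb _) (Set.mem_insert_of_mem _ (Set.mem_image_of_mem _ (le_refl (Astar p))))
    have hm_pos : ∀ t : ℝ, 0 < t → 0 < m t := by
      intro t ht
      by_cases hne : {p : S × A | t ≤ Astar p}.Nonempty
      · have hcl : IsClosed {p : S × A | t ≤ Astar p} :=
          isClosed_le continuous_const hAstar_cont
        obtain ⟨q, hq, hqmin⟩ := hcl.isCompact.exists_isMinOn hne hAhat_cont.continuousOn
        have hqpos : 0 < Ahat q := by
          rcases lt_or_eq_of_le (hAhat_nonneg q) with h | h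
          · exact h
          · exfalso
            have h0 : Astar q = 0 := (hiff q).mp h.symm
            have h1 : t ≤ Astar q := hq
            linarith
        have hle : min B (Ahat q) ≤ m t := by
          apply le_csInf (Set.insert_nonempty _ _)
          rintro x (rfl | ⟨p, hp, rfl⟩)
          · exact min_le_left _ _
          · exact le_trans (min_le_right _ _) (hqmin hp)
        exact lt_of_lt_of_le (lt_min hBpos hqpos) hle
      · have hemp : {p : S × A | t ≤ Astar p} = ∅ := Set.not_nonempty_iff_eq_empty.mp hne
        have : m t = B := by
          rw [hm]
          simp [hemp]
        rw [this]; exact hBpos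
    -- the gain g
    set g : ℝ → ℝ := fun t => t / (t + 1) with hg
    have hg0 : g 0 = 0 := by simp [hg]
    have hg_le_one : ∀ t : ℝ, 0 ≤ t → g t ≤ 1 := fun t ht => by
      rw [hg]
      exact div_le_one_of_le₀ (by linarith) (by linarith)
    have hg_pos : ∀ t : ℝ, 0 < t → 0 < g t := fun t ht => div_pos ht (by linarith)
    have hg_mono : ∀ t1 t2 : ℝ, 0 ≤ t1 → t1 < t2 → g t1 < g t2 := by
      intro t1 t2 h1 h12
      rw [hg]
      simp only
      rw [div_lt_div_iff₀ (by linarith) (by linarith)]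
      nlinarith
    -- the upper envelope N
    have hub : ∀ t : ℝ, ∀ x ∈ insert (0:ℝ) (Ahat '' {p : S × A | Astar p ≤ t}), x ≤ B := by
      rintro t x (rfl | ⟨p, -, rfl⟩)
      · exact hBpos.le
      · exact (hBgt p).le
    have hbdda : ∀ t : ℝ, BddAbove (insert (0:ℝ) (Ahat '' {p : S × A | Astar p ≤ t})) :=
      fun t => ⟨B, hub t⟩
    set N : ℝ → ℝ := fun t => sSup (insert 0 (Ahat '' {p : S × A | Astar p ≤ t})) with hN
    have hN0 : N 0 = 0 := by
      apply le_antisymm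
      · apply csSup_le (Set.insert_nonempty _ _)
        rintro x (rfl | ⟨p, hp, rfl⟩)
        · exact le_refl _
        · have h0 : Astar p = 0 := le_antisymm hp (hAstar_nonneg p)
          exact le_of_eq ((hiff p).mpr h0)
      · exact le_csSup (hbdda 0) (Set.mem_insert _ _)
    have hN_mono : ∀ t1 t2 : ℝ, t1 ≤ t2 → N t1 ≤ N t2 :=
      fun t1 t2 h => csSup_le_csSup (hbdda t2) (Set.insert_nonempty _ _)
        (Set.insert_subset_insert (Set.image_mono (fun p hp => le_trans hp h)))
    have hN_ge : ∀ p : S × A, Ahat p ≤ N (Astar p) := fun p =>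
      le_csSup (hbdda _) (Set.mem_insert_of_mem _ (Set.mem_image_of_mem _ (le_refl (Astar p))))
    refine ⟨fun t => g t * m t, fun t => t + N t, ⟨?_, ?_⟩, ⟨?_, ?_⟩, ?_⟩
    · simp [hg0]
    · intro t1 h1 t2 h2 h12
      simp only
      rcases eq_or_lt_of_le (Set.mem_Ici.mp h1) with h0 | h0
      · rw [← h0, hg0, zero_mul]
        have ht2 : 0 < t2 := by rw [← h0] at h12; exact h12
        exact mul_pos (hg_pos t2 ht2) (hm_pos t2 ht2)
      · calc g t1 * m t1 < g t2 * m t1 :=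
              mul_lt_mul_of_pos_right (hg_mono t1 t2 h0.le h12) (hm_pos t1 h0)
          _ ≤ g t2 * m t2 :=
              mul_le_mul_of_nonneg_left (hm_mono h12.le) (hg_pos t2 (lt_trans h0 h12)).le
    · simp [hN0]
    · intro t1 _ t2 _ h12
      simp only
      exact add_lt_add_of_lt_of_le h12 (hN_mono t1 t2 h12.le)
    · intro p
      constructor
      · calc g (Astar p) * m (Astar p) ≤ 1 * m (Astar p) :=
              mul_le_mul_of_nonneg_right (hg_le_one _ (hAstar_nonneg p)) (hm_nonneg _)
          _ = m (Astar p) := one_mul _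
          _ ≤ Ahat p := hm_le p
      · calc Ahat p ≤ N (Astar p) := hN_ge p
          _ ≤ Astar p + N (Astar p) := le_add_of_nonneg_left (hAstar_nonneg p)
end
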